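/- arXiv:1907.00380 — 4 statements merged into one kernel-verified Lean document; each statement's English description precedes it below -/
import Mathlib

section
/- Let P be a finite poset, let I ⊆ Inc(P), and suppose there is at least one alternating cycle in P all of whose pairs belong to I. Then any alternating cycle with all pairs in I whose size k is minimum among all alternating cycles with all pairs in I is a strict alternating cycle. -/
/-!
Common definitions for formalizing dimension theory of finite posets,
following Kozik–Micek–Trotter, "Dimension is polynomial in height for
posets with planar cover graphs".
-/

namespace PlanarDim

variable {α : Type*}

/-- Two elements of a poset are incomparable. -/
def Incomp [PartialOrder α] (a b : α) : Prop := ¬ a ≤ b ∧ ¬ b ≤ a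

/-- `Inc(P)`: the set of ordered pairs of incomparable elements. -/
def incPairs (α : Type*) [PartialOrder α] : Set (α × α) := {p | Incomp p.1 p.2}

/-- A linear order `L` on the ground set is a linear extension of the partial order. -/
def IsLinExt [PartialOrder α] (L : LinearOrder α) : Prop :=
  ∀ x y : α, x ≤ y → L.le x y

/-- A set `I` of ordered pairs is reversible if some linear extension of the
partial order reverses every pair of `I` (i.e. puts the second coordinate
strictly below the first). -/
def Reversible [PartialOrder α] (I : Set (α × α)) : Prop :=
  ∃ L : LinearOrder α, IsLinExt L ∧ ∀ p ∈ I, L.lt p.2 p.1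

/-- The cyclic successor on `Fin k`. -/
def nextIdx {k : ℕ} (i : Fin k) : Fin k := ⟨(i.1 + 1) % k, Nat.mod_lt _ i.pos⟩

/-- `((x 0, y 0), …, (x (k-1), y (k-1)))` is an alternating cycle:
`k ≥ 2`, each pair is incomparable, and `x i ≤ y (i+1)` cyclically. -/
def IsAltCycle [PartialOrder α] {k : ℕ} (x y : Fin k → α) : Prop :=
  2 ≤ k ∧ (∀ i, Incomp (x i) (y i)) ∧ ∀ i, x i ≤ y (nextIdx i)

/-- A strict alternating cycle: `k ≥ 2`, each pair is incomparable, and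
`x i ≤ y j` holds exactly when `j = i + 1` cyclically. -/
def IsStrictAltCycle [PartialOrder α] {k : ℕ} (x y : Fin k → α) : Prop :=
  2 ≤ k ∧ (∀ i, Incomp (x i) (y i)) ∧ ∀ i j, x i ≤ y j ↔ j = nextIdx i

/-- `dim(I)`: the least `d ≥ 1` such that `I` can be covered by `d` reversible
subsets of `Inc(P)`. -/
noncomputable def dimI [PartialOrder α] (I : Set (α × α)) : ℕ :=
  sInf {d | 1 ≤ d ∧ ∃ J : Fin d → Set (α × α),
    (∀ i, J i ⊆ incPairs α ∧ Reversible (J i)) ∧ I ⊆ ⋃ i, J i}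

/-- The Dushnik–Miller dimension of a poset: the least `d ≥ 1` for which there
are linear orders `L 0, …, L (d-1)` on the ground set with `x ≤ y` in the poset
iff `x ≤ y` in every `L i`. -/
noncomputable def posetDim (α : Type*) [PartialOrder α] : ℕ :=
  sInf {d | 1 ≤ d ∧ ∃ L : Fin d → LinearOrder α,
    ∀ x y : α, x ≤ y ↔ ∀ i, (L i).le x y}

/-- The height of a poset: the maximum number of elements in a chain. -/
noncomputable def posetHeight (α : Type*) [PartialOrder α] : ℕ :=
  sSup {n | ∃ s : Finset α, s.card = n ∧ IsChain (· ≤ ·) (↑s : Set α)}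

/-- The cover graph of a poset: distinct `x` and `y` are adjacent iff one
covers the other. -/
def coverGraph (α : Type*) [PartialOrder α] : SimpleGraph α where
  Adj x y := x ⋖ y ∨ y ⋖ x
  symm := ⟨fun x y h => Or.symm h⟩
  loopless := ⟨fun x h => by rcases h with h | h <;> exact absurd h.lt (lt_irrefl x)⟩

/-- `Min(P)`: the set of minimal elements. -/
def minSet (α : Type*) [PartialOrder α] : Set α := {x | IsMin x}

/-- `Max(P)`: the set of maximal elements. -/
def maxSet (α : Type*) [PartialOrder α] : Set α := {x | IsMax x}

/-- `Inc(Min(P), Max(P))`: incomparable pairs `(a, b)` with `a` minimal and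
`b` maximal. -/
def incMinMax (α : Type*) [PartialOrder α] : Set (α × α) :=
  {p | p ∈ incPairs α ∧ p.1 ∈ minSet α ∧ p.2 ∈ maxSet α}

/-- `WReach_r[G, σ, v]`: the set of vertices `u` weakly `r`-reachable from `v`
in the ordering `σ`: there is a path from `v` to `u` of length at most `r` all
of whose vertices are `≥ u` in `σ`. -/
def WReach (G : SimpleGraph α) (σ : LinearOrder α) (r : ℕ) (v : α) : Set α :=
  {u | ∃ p : G.Walk v u, p.IsPath ∧ p.length ≤ r ∧ ∀ w ∈ p.support, σ.le u w}

/-- The weak `r`-coloring number of a finite graph: the minimum over vertex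
orderings `σ` of the maximum over vertices `v` of `|WReach_r[G, σ, v]|`. -/
noncomputable def wcol (α : Type*) [Fintype α] (G : SimpleGraph α) (r : ℕ) : ℕ :=
  sInf {c | ∃ σ : LinearOrder α,
    c = Finset.univ.sup fun v => (WReach G σ r v).ncard}

end PlanarDim

/-!
If `x i ≤ y j` for some `j ≠ i + 1` in an alternating cycle, then `j ≠ i` by incomparability,
and the arc of pairs `j, j + 1, …, i`, closed up by `x i ≤ y j`, is again an alternating cycle
with pairs from the original one; it has at least two and fewer than `k` pairs, contradicting
minimality.
-/

namespace PlanarDim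

variable {α : Type*} [PartialOrder α] {k : ℕ}

def arcIdx (j : Fin k) (d : ℕ) (t : Fin (d + 1)) : Fin k :=
  ⟨(j.1 + t.1) % k, Nat.mod_lt _ j.pos⟩

lemma arcIdx_nextIdx (j : Fin k) {d : ℕ} (t : Fin (d + 1)) (ht : t.1 < d) :
    arcIdx j d (nextIdx t) = nextIdx (arcIdx j d t) := by
  ext
  simp only [arcIdx, nextIdx, Nat.mod_add_mod, Nat.mod_eq_of_lt (by omega : t.1 + 1 < d + 1),
    Nat.add_assoc]

lemma arcIdx_nextIdx_last (j : Fin k) (d : ℕ) :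
    arcIdx j d (nextIdx (Fin.last d)) = j := by
  ext
  simp [arcIdx, nextIdx, Nat.mod_eq_of_lt j.2]

lemma IsAltCycle.comp_arcIdx {x y : Fin k → α} (h : IsAltCycle x y) {j : Fin k} {d : ℕ}
    (hd : 1 ≤ d) (hclose : x (arcIdx j d (Fin.last d)) ≤ y j) :
    IsAltCycle (x ∘ arcIdx j d) (y ∘ arcIdx j d) := by
  obtain ⟨-, hinc, hle⟩ := h
  refine ⟨by omega, fun t => hinc _, fun t => ?_⟩
  rcases (Nat.lt_succ_iff.mp t.2).lt_or_eq with ht | ht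
  · simpa only [Function.comp, arcIdx_nextIdx j t ht] using hle (arcIdx j d t)
  · obtain rfl : t = Fin.last d := Fin.ext ht
    simpa only [Function.comp, arcIdx_nextIdx_last] using hclose

lemma exists_arc_of_ne {i j : Fin k} (hij : i ≠ j) (hnext : j ≠ nextIdx i) :
    ∃ d, 1 ≤ d ∧ d + 1 < k ∧ (j.1 + d) % k = i.1 := by
  have hij' : i.1 ≠ j.1 := Fin.val_ne_of_ne hij
  have hnext' : j.1 ≠ (i.1 + 1) % k := Fin.val_ne_of_ne hnext
  have hi := i.2
  have hj := j.2
  have hsucc : j.1 ≠ i.1 + 1 ∧ (i.1 + 1 = k → j.1 ≠ 0) := by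
    rcases Nat.lt_or_ge (i.1 + 1) k with h | h
    · rw [Nat.mod_eq_of_lt h] at hnext'; omega
    · rw [show i.1 + 1 = k by omega, Nat.mod_self] at hnext'; omega
  rcases lt_or_gt_of_ne hij' with hlt | hlt
  · refine ⟨i.1 + k - j.1, by omega, by omega, ?_⟩
    rw [show j.1 + (i.1 + k - j.1) = i.1 + k by omega, Nat.add_mod_right, Nat.mod_eq_of_lt hi]
  · refine ⟨i.1 - j.1, by omega, by omega, ?_⟩
    rw [show j.1 + (i.1 - j.1) = i.1 by omega, Nat.mod_eq_of_lt hi]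

lemma IsAltCycle.exists_shorter_of_le {x y : Fin k → α} (h : IsAltCycle x y) {i j : Fin k}
    (hxy : x i ≤ y j) (hnext : j ≠ nextIdx i) :
    ∃ m < k, ∃ f : Fin m → Fin k, IsAltCycle (x ∘ f) (y ∘ f) := by
  have hij : i ≠ j := by
    rintro rfl
    exact (h.2.1 i).1 hxy
  obtain ⟨d, hd, hdk, hdi⟩ := exists_arc_of_ne hij hnext
  have hlast : arcIdx j d (Fin.last d) = i := Fin.ext hdi
  exact ⟨d + 1, hdk, arcIdx j d, h.comp_arcIdx hd (hlast ▸ hxy)⟩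

end PlanarDim

open PlanarDim in
theorem minimum_alternating_cycle_is_strict_general
    {α : Type*} [PartialOrder α]
    (I : Set (α × α))
    {k : ℕ} (x y : Fin k → α)
    (hcyc : IsAltCycle x y) (hmem : ∀ i, (x i, y i) ∈ I)
    (hmin : ∀ (m : ℕ) (x' y' : Fin m → α),
      IsAltCycle x' y' → (∀ i, (x' i, y' i) ∈ I) → k ≤ m) :
    IsStrictAltCycle x y := by
  refine ⟨hcyc.1, hcyc.2.1, fun i j => ⟨fun hxy => ?_, fun hj => hj ▸ hcyc.2.2 i⟩⟩
  by_contra hnext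
  obtain ⟨m, hmk, f, hf⟩ := hcyc.exists_shorter_of_le hxy hnext
  exact (hmin m _ _ hf fun t => hmem (f t)).not_gt hmk

open PlanarDim in
/-- An alternating cycle with all pairs in `I` of minimum
size among all alternating cycles with all pairs in `I` is a strict
alternating cycle. -/
theorem minimum_alternating_cycle_is_strict
    {α : Type*} [Fintype α] [PartialOrder α]
    (I : Set (α × α)) (hI : I ⊆ incPairs α)
    {k : ℕ} (x y : Fin k → α)
    (hcyc : IsAltCycle x y) (hmem : ∀ i, (x i, y i) ∈ I)
    (hmin : ∀ (m : ℕ) (x' y' : Fin m → α),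
      IsAltCycle x' y' → (∀ i, (x' i, y' i) ∈ I) → k ≤ m) :
    IsStrictAltCycle x y :=
  minimum_alternating_cycle_is_strict_general I x y hcyc hmem hmin
end

section
/- Let P be a finite poset. A subset I ⊆ Inc(P) is reversible if and only if I contains no strict alternating cycle, i.e., there is no strict alternating cycle in P all of whose pairs belong to I. -/
/-!
A linear extension reversing all pairs of an alternating cycle would satisfy
`y 0 < x 0 ≤ y 1 < x 1 ≤ ⋯ ≤ y 0`. Conversely, by Szpilrajn's extension theorem `I` is
reversible as soon as the relation "`a < b` or `(b, a) ∈ I`" has no cycle. A cycle of that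
relation yields a cyclic sequence of pairs of `I` with `x i ≤ y (i + 1)`, and a shortest such
sequence has no chords `x i ≤ y j`, `j ≠ i + 1`: it is a strict alternating cycle.
-/

namespace Relation

variable {β : Type*}

/-- Addition in `Fin (n + 1)` wraps around, so this is a closed walk of length `n + 1`. -/
def IsCyclicChain (r : β → β → Prop) {n : ℕ} (f : Fin (n + 1) → β) : Prop :=
  ∀ i, r (f i) (f (i + 1))

variable {r : β → β → Prop}

lemma isCyclicChain_of_path {g : ℕ → β} {n : ℕ} (hg : ∀ t < n, r (g t) (g (t + 1)))
    (hclose : r (g n) (g 0)) : IsCyclicChain r fun i : Fin (n + 1) => g i := by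
  intro i
  change r (g i) (g (i + 1 : Fin (n + 1)))
  rw [Fin.val_add_one]
  split_ifs with h
  · simpa [h] using hclose
  · exact hg i (Fin.val_lt_last h)

lemma ReflTransGen.exists_path {a b : β} (h : ReflTransGen r a b) :
    ∃ (g : ℕ → β) (n : ℕ), g 0 = a ∧ g n = b ∧ ∀ t < n, r (g t) (g (t + 1)) := by
  induction h using ReflTransGen.head_induction_on with
  | refl => exact ⟨fun _ => b, 0, rfl, rfl, by simp⟩
  | @head a c hac _ ih =>
    obtain ⟨g, n, hg0, hgn, hg⟩ := ih
    refine ⟨fun | 0 => a | t + 1 => g t, n + 1, rfl, hgn, ?_⟩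
    rintro (_ | t) ht
    · simpa [hg0] using hac
    · exact hg t (by omega)

lemma TransGen.exists_isCyclicChain {b : β} (h : TransGen r b b) :
    ∃ (n : ℕ) (f : Fin (n + 1) → β), IsCyclicChain r f := by
  obtain ⟨c, hbc, hcb⟩ := TransGen.head'_iff.mp h
  obtain ⟨g, n, hg0, hgn, hg⟩ := hcb.exists_path
  exact ⟨n, _, isCyclicChain_of_path hg (by rwa [hgn, hg0])⟩

open Fin.NatCast in
/-- A chord `f i → f j` of a cyclic chain closes the shorter cyclic chain `f j, …, f i`. -/
lemma IsCyclicChain.shortcut {n : ℕ} {f : Fin (n + 1) → β} (hf : IsCyclicChain r f)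
    {i j : Fin (n + 1)} (hij : r (f i) (f j)) :
    IsCyclicChain r fun t : Fin ((i - j).val + 1) => f (j + (t.val : Fin (n + 1))) :=
  isCyclicChain_of_path (g := fun t : ℕ => f (j + (t : Fin (n + 1))))
    (fun t _ => by simpa [add_assoc] using hf (j + t)) (by simpa using hij)

lemma exists_isCyclicChain_chordless (h : ∃ (n : ℕ) (f : Fin (n + 1) → β), IsCyclicChain r f) :
    ∃ (n : ℕ) (f : Fin (n + 1) → β), ∀ i j, r (f i) (f j) ↔ j = i + 1 := by
  classical
  obtain ⟨f, hf⟩ := Nat.find_spec h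
  refine ⟨_, f, fun i j => ⟨fun hij => ?_, fun hj => hj ▸ hf i⟩⟩
  by_contra hne
  have hlast : i - j ≠ Fin.last _ := by
    intro hl
    have := congrArg (· + 1) hl
    simp only [Fin.last_add_one, sub_add_eq_add_sub, sub_eq_zero] at this
    exact hne this.symm
  exact Nat.find_min h (Fin.val_lt_last hlast) ⟨_, hf.shortcut hij⟩

end Relation

lemma exists_linearOrder_extending {β : Type*} (r : β → β → Prop) [IsPartialOrder β r] :
    ∃ L : LinearOrder β, ∀ a b, r a b → L.le a b := by
  classical
  obtain ⟨s, hs, hrs⟩ := extend_partialOrder r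
  exact ⟨{ le := s
           le_refl := refl_of s
           le_trans := fun _ _ _ => trans_of s
           le_antisymm := fun _ _ => antisymm_of s
           le_total := total_of s
           toDecidableLE := inferInstance }, hrs⟩

namespace PlanarDim

open Relation

variable {α : Type*} [PartialOrder α] {I : Set (α × α)}

lemma IsStrictAltCycle.isAltCycle {k : ℕ} {x y : Fin k → α} (h : IsStrictAltCycle x y) :
    IsAltCycle x y :=
  ⟨h.1, h.2.1, fun i => (h.2.2 i _).mpr rfl⟩

lemma Reversible.not_isAltCycle (hrev : Reversible I) {k : ℕ} {x y : Fin k → α} :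
    ¬ (IsAltCycle x y ∧ ∀ i, (x i, y i) ∈ I) := by
  rintro ⟨⟨hk, -, hxy⟩, hmem⟩
  obtain ⟨L, hL, hLI⟩ := hrev
  have : Nonempty (Fin k) := ⟨⟨0, by omega⟩⟩
  obtain ⟨i, hi⟩ := @Finite.exists_max _ _ _ _ L y
  exact @lt_irrefl α L.toPreorder _ (@lt_of_lt_of_le α L.toPreorder _ _ _ (hLI _ (hmem i))
    (@le_trans α L.toPreorder _ _ _ (hL _ _ (hxy i)) (hi _)))

lemma nextIdx_eq_add_one {n : ℕ} (i : Fin (n + 1)) : nextIdx i = i + 1 :=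
  Fin.ext (by simp [nextIdx, Fin.val_add])

/-- `AltStep I p q`: the pairs `p, q ∈ I` may be consecutive in an alternating cycle. -/
def AltStep (I : Set (α × α)) (p q : α × α) : Prop :=
  p ∈ I ∧ q ∈ I ∧ p.1 ≤ q.2

/-- `ForcedLT I a b`: every linear extension reversing `I` puts `a` strictly below `b`. -/
def ForcedLT (I : Set (α × α)) (a b : α) : Prop :=
  a < b ∨ (b, a) ∈ I

lemma reflTransGen_forcedLT_cases {a b : α} (h : ReflTransGen (ForcedLT I) a b) :
    a ≤ b ∨ ∃ p q : α × α, p ∈ I ∧ q ∈ I ∧ a ≤ p.2 ∧ ReflTransGen (AltStep I) p q ∧ q.1 ≤ b := by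
  induction h with
  | refl => exact Or.inl le_rfl
  | @tail b c _ hbc ih =>
    rcases ih with hab | ⟨p, q, hp, hq, hap, hpq, hqb⟩ <;> rcases hbc with hbc | hcb
    · exact Or.inl (hab.trans hbc.le)
    · exact Or.inr ⟨(c, b), (c, b), hcb, hcb, hab, .refl, le_rfl⟩
    · exact Or.inr ⟨p, q, hp, hq, hap, hpq, hqb.trans hbc.le⟩
    · exact Or.inr ⟨p, (c, b), hp, hcb, hap, hpq.tail ⟨hq, hcb, hqb⟩, le_rfl⟩

lemma exists_transGen_altStep_of_transGen_forcedLT {a : α} (h : TransGen (ForcedLT I) a a) :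
    ∃ p, TransGen (AltStep I) p p := by
  obtain ⟨b, hab, hba⟩ := TransGen.head'_iff.mp h
  rcases reflTransGen_forcedLT_cases hba with hba | ⟨p, q, hp, hq, hbp, hpq, hqa⟩ <;>
    rcases hab with hab | hba'
  · exact absurd (hab.trans_le hba) (lt_irrefl a)
  · exact ⟨(b, a), .single ⟨hba', hba', hba⟩⟩
  · exact ⟨p, TransGen.tail' hpq ⟨hq, hp, hqa.trans (hab.le.trans hbp)⟩⟩
  · exact ⟨p, TransGen.tail' (hpq.tail ⟨hq, hba', hqa⟩) ⟨hba', hp, hbp⟩⟩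

lemma reversible_of_forall_not_transGen_forcedLT (h : ∀ a, ¬ TransGen (ForcedLT I) a a) :
    Reversible I := by
  have : IsPartialOrder α (ReflTransGen (ForcedLT I)) :=
    { refl := fun _ => .refl
      trans := fun _ _ _ => .trans
      antisymm := fun a b hab hba =>
        ((reflTransGen_iff_eq_or_transGen.mp hab).resolve_right
          fun hab' => h a (hab'.trans_left hba)).symm }
  obtain ⟨L, hL⟩ := exists_linearOrder_extending (ReflTransGen (ForcedLT I))
  refine ⟨L, fun a b hab => hL a b ?_, fun p hp => ?_⟩
  · rcases hab.lt_or_eq with hab | rfl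
    exacts [.single (Or.inl hab), .refl]
  · have hne : p.2 ≠ p.1 := by
      intro heq
      have hcycle : TransGen (ForcedLT I) p.2 p.1 := .single (Or.inr hp)
      exact h p.1 (heq ▸ hcycle)
    exact @lt_of_le_of_ne α L.toPartialOrder _ _ (hL _ _ (.single (Or.inr hp))) hne

lemma isStrictAltCycle_of_chordless (hI : I ⊆ incPairs α) {n : ℕ} {f : Fin (n + 1) → α × α}
    (hf : ∀ i j, AltStep I (f i) (f j) ↔ j = i + 1) :
    IsStrictAltCycle (fun i => (f i).1) (fun i => (f i).2) ∧ ∀ i, f i ∈ I := by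
  have hmem i : f i ∈ I := ((hf i (i + 1)).mpr rfl).1
  refine ⟨⟨?_, fun i => hI (hmem i), fun i j => ?_⟩, hmem⟩
  · rcases n with _ | n
    · exact absurd ((hf 0 0).mpr rfl).2.2 (hI (hmem 0)).1
    · omega
  · rw [nextIdx_eq_add_one, ← hf]
    exact ⟨fun h => ⟨hmem i, hmem j, h⟩, fun h => h.2.2⟩

end PlanarDim

open PlanarDim in
theorem reversible_iff_no_strict_alternating_cycle_general
    {α : Type*} [PartialOrder α]
    (I : Set (α × α)) (hI : I ⊆ incPairs α) :
    Reversible I ↔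
      ¬ ∃ (k : ℕ) (x y : Fin k → α),
        IsStrictAltCycle x y ∧ ∀ i, (x i, y i) ∈ I := by
  constructor
  · rintro hrev ⟨k, x, y, hxy, hmem⟩
    exact hrev.not_isAltCycle ⟨hxy.isAltCycle, hmem⟩
  · intro h
    refine reversible_of_forall_not_transGen_forcedLT fun a ha => h ?_
    obtain ⟨p, hp⟩ := exists_transGen_altStep_of_transGen_forcedLT ha
    obtain ⟨n, f, hf⟩ := Relation.exists_isCyclicChain_chordless hp.exists_isCyclicChain
    exact ⟨n + 1, _, _, isStrictAltCycle_of_chordless hI hf⟩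

open PlanarDim in
/-- A subset `I ⊆ Inc(P)` of a finite poset is reversible if
and only if `I` contains no strict alternating cycle. -/
theorem reversible_iff_no_strict_alternating_cycle
    {α : Type*} [Fintype α] [PartialOrder α]
    (I : Set (α × α)) (hI : I ⊆ incPairs α) :
    Reversible I ↔
      ¬ ∃ (k : ℕ) (x y : Fin k → α),
        IsStrictAltCycle x y ∧ ∀ i, (x i, y i) ∈ I :=
  reversible_iff_no_strict_alternating_cycle_general I hI
end

section
/- For every n ≥ 2, the standard example S_n has Dushnik–Miller dimension exactly n: dim(S_n) = n. -/
open PlanarDim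

/-- The order relation of the standard example `S n`: `a i = Sum.inl i`,
`b j = Sum.inr j`, and `a i < b j` iff `i ≠ j` are the only strict
comparabilities. -/
def stdLe (n : ℕ) (x y : Fin n ⊕ Fin n) : Prop :=
  x = y ∨ ∃ i j : Fin n, x = Sum.inl i ∧ y = Sum.inr j ∧ i ≠ j

/-- The standard example `S n` as a partial order on `Fin n ⊕ Fin n`. -/
def stdExampleOrder (n : ℕ) : PartialOrder (Fin n ⊕ Fin n) where
  le := stdLe n
  lt x y := stdLe n x y ∧ ¬ stdLe n y x
  lt_iff_le_not_ge _ _ := Iff.rfl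
  le_refl x := Or.inl rfl
  le_trans x y z hxy hyz := by
    rcases hxy with rfl | ⟨i, j, rfl, rfl, hij⟩
    · exact hyz
    · rcases hyz with rfl | ⟨i', j', h1, h2, hij'⟩
      · exact Or.inr ⟨i, j, rfl, rfl, hij⟩
      · exact absurd h1 (by simp)
  le_antisymm x y hxy hyx := by
    rcases hxy with rfl | ⟨i, j, rfl, rfl, hij⟩
    · rfl
    · rcases hyx with h | ⟨i', j', h1, h2, hij'⟩
      · exact h.symm
      · exact absurd h1 (by simp)

/-!
Every linear order of a realizer is a linear extension, and no linear extension can reverse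
two incomparable pairs `(a i, b i)`, `(a j, b j)` with `a i < b j` and `a j < b i`: it would
give `b i < a i ≤ b j < a j ≤ b i`. So each of the `n` pairs `(a i, b i)` is reversed by a
different order of the realizer, and `dim(S n) ≥ n`. Conversely the `n` orders
`a's except a i < b i < a i < b's except b i` realize `S n` as soon as `n ≥ 2`.
-/

namespace PlanarDim

variable {α : Type*} [PartialOrder α]

def IsRealizer {d : ℕ} (L : Fin d → LinearOrder α) : Prop :=
  ∀ x y : α, x ≤ y ↔ ∀ i, (L i).le x y

theorem posetDim_eq_of_isRealizer {d : ℕ} (hd : 1 ≤ d) {L : Fin d → LinearOrder α}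
    (hL : IsRealizer L)
    (hmin : ∀ (e : ℕ) (L' : Fin e → LinearOrder α), IsRealizer L' → d ≤ e) :
    posetDim α = d :=
  le_antisymm (Nat.sInf_le ⟨hd, L, hL⟩)
    (le_csInf ⟨d, hd, L, hL⟩ fun _ ⟨_, L', hL'⟩ => hmin _ L' hL')

theorem IsRealizer.isLinExt {d : ℕ} {L : Fin d → LinearOrder α} (hL : IsRealizer L)
    (i : Fin d) : IsLinExt (L i) :=
  fun x y hxy => (hL x y).mp hxy i

theorem IsRealizer.exists_not_le {d : ℕ} {L : Fin d → LinearOrder α}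
    (hL : IsRealizer L) {x y : α} (h : ¬ x ≤ y) : ∃ i, ¬ (L i).le x y := by
  by_contra! hc
  exact h ((hL x y).mpr hc)

theorem IsLinExt.le_or_le_of_le_of_le {L : LinearOrder α} (hL : IsLinExt L)
    {x₁ y₁ x₂ y₂ : α} (h₁₂ : x₁ ≤ y₂) (h₂₁ : x₂ ≤ y₁) : L.le x₁ y₁ ∨ L.le x₂ y₂ := by
  refine or_iff_not_imp_left.mpr fun h₁ => ?_
  have hy₁x₁ : L.le y₁ x₁ := (L.le_total x₁ y₁).resolve_left h₁
  exact L.le_trans _ _ _ (hL _ _ h₂₁) (L.le_trans _ _ _ hy₁x₁ (hL _ _ h₁₂))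

theorem IsRealizer.card_le {ι : Type*} [Fintype ι] {x y : ι → α}
    (hinc : ∀ i, ¬ x i ≤ y i) (hcross : ∀ i j, i ≠ j → x i ≤ y j)
    {d : ℕ} {L : Fin d → LinearOrder α} (hL : IsRealizer L) : Fintype.card ι ≤ d := by
  choose k hk using fun i => hL.exists_not_le (hinc i)
  have hk_inj : Function.Injective k := by
    intro i j hij
    by_contra hne
    have := (hL.isLinExt (k i)).le_or_le_of_le_of_le (hcross i j hne) (hcross j i (Ne.symm hne))
    exact this.elim (hk i) (hij ▸ hk j)
  simpa using Fintype.card_le_of_injective k hk_inj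

end PlanarDim

/-- Ranks realizing the order `a's except a i < b i < a i < b's except b i`. -/
def stdRank (n : ℕ) (i : Fin n) : Fin n ⊕ Fin n → ℕ
  | Sum.inl j => if j = i then n + 1 else j
  | Sum.inr j => if j = i then n else n + 2 + j

theorem stdRank_injective (n : ℕ) (i : Fin n) : Function.Injective (stdRank n i) := by
  rintro (j | j) (l | l) h <;>
    simp only [stdRank, Fin.ext_iff, Sum.inl.injEq, Sum.inr.injEq, reduceCtorEq] at h ⊢ <;>
    split_ifs at h <;> omega

theorem stdRank_le_of_stdLe {n : ℕ} (i : Fin n) {x y : Fin n ⊕ Fin n} (h : stdLe n x y) :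
    stdRank n i x ≤ stdRank n i y := by
  rcases h with rfl | ⟨j, l, rfl, rfl, hjl⟩
  · exact le_rfl
  · simp only [stdRank, Ne, Fin.ext_iff] at hjl ⊢
    split_ifs <;> omega

theorem exists_stdRank_lt_of_not_stdLe {n : ℕ} (hn : 2 ≤ n) {x y : Fin n ⊕ Fin n}
    (h : ¬ stdLe n x y) : ∃ i, stdRank n i y < stdRank n i x := by
  rcases x with j | j <;> rcases y with l | l
  · have hjl : j ≠ l := fun e => h (Or.inl (e ▸ rfl))
    refine ⟨j, ?_⟩
    simp only [stdRank, Ne, Fin.ext_iff] at hjl ⊢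
    split_ifs <;> omega
  · obtain rfl : j = l := by_contra fun hne => h (Or.inr ⟨j, l, rfl, rfl, hne⟩)
    exact ⟨j, by simp [stdRank]⟩
  · have := Fin.nontrivial_iff_two_le.mpr hn
    obtain ⟨i, hij⟩ := exists_ne j
    refine ⟨i, ?_⟩
    simp only [stdRank, Ne, Fin.ext_iff] at hij ⊢
    split_ifs <;> omega
  · have hjl : j ≠ l := fun e => h (Or.inl (e ▸ rfl))
    refine ⟨l, ?_⟩
    simp only [stdRank, Ne, Fin.ext_iff] at hjl ⊢
    split_ifs <;> omega

def stdRealizer (n : ℕ) (i : Fin n) : LinearOrder (Fin n ⊕ Fin n) :=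
  LinearOrder.lift' (stdRank n i) (stdRank_injective n i)

theorem isRealizer_stdRealizer {n : ℕ} (hn : 2 ≤ n) :
    @IsRealizer _ (stdExampleOrder n) n (stdRealizer n) := by
  refine fun x y => ⟨fun h i => stdRank_le_of_stdLe i h, fun h => ?_⟩
  by_contra hxy
  obtain ⟨i, hi⟩ := exists_stdRank_lt_of_not_stdLe hn hxy
  exact (h i).not_gt hi

theorem le_of_isRealizer_stdExample {n d : ℕ} {L : Fin d → LinearOrder (Fin n ⊕ Fin n)}
    (hL : @IsRealizer _ (stdExampleOrder n) d L) : n ≤ d := by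
  -- `Fin n ⊕ Fin n` carries the disjoint-sum order globally; the local instance takes precedence.
  let _ := stdExampleOrder n
  have hinc (i : Fin n) : ¬ stdLe n (Sum.inl i) (Sum.inr i) := by
    rintro (h | ⟨_, _, h₁, h₂, hne⟩)
    · exact Sum.inl_ne_inr h
    · exact hne ((Sum.inl_injective h₁).symm.trans (Sum.inr_injective h₂))
  simpa using hL.card_le hinc fun i j hij => Or.inr ⟨i, j, rfl, rfl, hij⟩

/-- For every `n ≥ 2`, the standard example `S n` has
Dushnik–Miller dimension exactly `n`. -/
theorem posetDim_standardExample (n : ℕ) (hn : 2 ≤ n) :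
    @posetDim (Fin n ⊕ Fin n) (stdExampleOrder n) = n :=
  @posetDim_eq_of_isRealizer _ (stdExampleOrder n) n (by omega) _ (isRealizer_stdRealizer hn)
    fun _ _ => le_of_isRealizer_stdExample
end

section
/- Reduction to min-max pairs: for every finite poset P there exists a finite poset Q containing P as an induced subposet such that (1) the height of Q equals the height of P; (2) every element of Q not in P has degree 1 in the cover graph of Q, and the cover graph of Q restricted to the elements of P coincides with the cover graph of P; and (3) dim(P) ≤ dim(Min(Q), Max(Q)). -/
namespace MinMaxRed
open PlanarDim

variable {α : Type*} [PartialOrder α]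

/-- Build a `LinearOrder` from an `IsLinearOrder` relation. -/
noncomputable def mkLin (s : α → α → Prop) (h : IsLinearOrder α s) : LinearOrder α where
  le := s
  lt a b := s a b ∧ ¬ s b a
  le_refl a := by haveI := h; exact refl_of s a
  le_trans a b c := by haveI := h; exact trans_of s
  le_antisymm a b := by haveI := h; exact antisymm
  le_total := by haveI := h; exact total_of s
  lt_iff_le_not_ge _ _ := Iff.rfl
  toDecidableLE := Classical.decRel s

theorem exists_linExt (α : Type*) [PartialOrder α] : ∃ L : LinearOrder α, IsLinExt L := by
  obtain ⟨s, hs, hle⟩ := extend_partialOrder (α := α) (· ≤ ·)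
  exact ⟨mkLin s hs, fun x y h => hle x y h⟩

theorem exists_linExt_reversing {a b : α} (h : Incomp a b) :
    ∃ L : LinearOrder α, IsLinExt L ∧ L.lt b a := by
  classical
  set r : α → α → Prop := fun u v => u ≤ v ∨ (u ≤ b ∧ a ≤ v) with hr
  haveI : IsPartialOrder α r :=
    { refl := fun u => Or.inl le_rfl
      trans := by
        rintro u v w (huv | ⟨hub, hav⟩) (hvw | ⟨hvb, haw⟩)
        · exact Or.inl (huv.trans hvw)
        · exact Or.inr ⟨huv.trans hvb, haw⟩
        · exact Or.inr ⟨hub, hav.trans hvw⟩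
        · exact absurd (hav.trans hvb) h.1
      antisymm := by
        rintro u v (huv | ⟨hub, hav⟩) (hvu | ⟨hvb, hau⟩)
        · exact le_antisymm huv hvu
        · exact absurd (hau.trans (huv.trans hvb)) h.1
        · exact absurd (hav.trans (hvu.trans hub)) h.1
        · exact absurd (hav.trans hvb) h.1 }
  obtain ⟨s, hs, hle⟩ := extend_partialOrder r
  refine ⟨mkLin s hs, fun x y hxy => hle x y (Or.inl hxy), ?_, ?_⟩
  · exact hle b a (Or.inr ⟨le_rfl, le_rfl⟩)
  · intro hab
    have : a = b := by haveI := hs; exact antisymm hab (hle b a (Or.inr ⟨le_rfl, le_rfl⟩))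
    exact h.1 (this ▸ le_rfl)

theorem reversible_empty (α : Type*) [PartialOrder α] : Reversible (∅ : Set (α × α)) := by
  obtain ⟨L, hL⟩ := exists_linExt α
  exact ⟨L, hL, by simp⟩

theorem reversible_of_subsingleton {I : Set (α × α)} (hI : I ⊆ incPairs α)
    (h : I.Subsingleton) : Reversible I := by
  rcases h.eq_empty_or_singleton with rfl | ⟨p, rfl⟩
  · exact reversible_empty α
  · obtain ⟨L, hL, hlt⟩ := exists_linExt_reversing (hI rfl)
    exact ⟨L, hL, by rintro q rfl; exact hlt⟩

/-- Pull back a linear order along an injective map. -/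
noncomputable def pullLin {β : Type*} (L : LinearOrder β) (f : α → β)
    (hf : Function.Injective f) : LinearOrder α where
  le x y := L.le (f x) (f y)
  lt x y := L.le (f x) (f y) ∧ ¬ L.le (f y) (f x)
  le_refl x := L.le_refl _
  le_trans x y z := L.le_trans _ _ _
  le_antisymm x y h1 h2 := hf (L.le_antisymm _ _ h1 h2)
  le_total x y := L.le_total _ _
  lt_iff_le_not_ge _ _ := Iff.rfl
  toDecidableLE x y := L.toDecidableLE _ _


/-! The construction `Q α`: add a pendant minimal element below every
non-minimal element and a pendant maximal element above every non-maximal one. -/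

def Carrier (α : Type*) [PartialOrder α] : Type _ :=
  {p : α × Fin 3 // p.2 = 0 ∨ (p.2 = 1 ∧ ¬ IsMin p.1) ∨ (p.2 = 2 ∧ ¬ IsMax p.1)}

instance : PartialOrder (Carrier α) where
  le p q := p = q ∨ (p.1.2 ≠ 2 ∧ q.1.2 ≠ 1 ∧ p.1.1 ≤ q.1.1)
  le_refl p := Or.inl rfl
  le_trans p q r := by
    rintro (rfl | ⟨h2, h1, hle⟩) h
    · exact h
    · rcases h with rfl | ⟨g2, g1, gle⟩
      · exact Or.inr ⟨h2, h1, hle⟩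
      · exact Or.inr ⟨h2, g1, hle.trans gle⟩
  le_antisymm p q := by
    rintro (rfl | ⟨h2, h1, hle⟩) h
    · rfl
    · rcases h with rfl | ⟨g2, g1, gle⟩
      · rfl
      · have hv : p.1.1 = q.1.1 := le_antisymm hle gle
        have hp0 : p.1.2 = 0 := by omega
        have hq0 : q.1.2 = 0 := by omega
        exact Subtype.ext (Prod.ext hv (hp0.trans hq0.symm))

lemma carrier_le_def {p q : Carrier α} :
    p ≤ q ↔ p = q ∨ (p.1.2 ≠ 2 ∧ q.1.2 ≠ 1 ∧ p.1.1 ≤ q.1.1) := Iff.rfl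

noncomputable instance [Fintype α] : Fintype (Carrier α) := by
  classical
  have : Finite (Carrier α) := by unfold Carrier; infer_instance
  exact Fintype.ofFinite _

/-- The embedding of `α` into `Carrier α`. -/
def fQ : α ↪o Carrier α where
  toFun x := ⟨(x, 0), Or.inl rfl⟩
  inj' x y h := congrArg (fun p => p.1.1) h
  map_rel_iff' := by
    intro x y
    rw [carrier_le_def]
    constructor
    · rintro (h | ⟨-, -, h⟩)
      · exact le_of_eq (congrArg (fun p : Carrier α => p.1.1) h)
      · exact h
    · intro h
      exact Or.inr ⟨show ¬ ((0 : Fin 3) = 2) by decide, show ¬ ((0 : Fin 3) = 1) by decide, h⟩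

lemma fQ_val (x : α) : (fQ x : Carrier α).1 = (x, 0) := rfl

lemma mem_range_fQ {b : Carrier α} (h : b.1.2 = 0) : b ∈ Set.range (fQ (α := α)) :=
  ⟨b.1.1, Subtype.ext (Prod.ext rfl h.symm)⟩

open scoped Classical in
/-- The minimal representative of `x` in `Carrier α`. -/
noncomputable def mQ (x : α) : Carrier α :=
  if h : IsMin x then fQ x else show Carrier α from ⟨(x, 1), Or.inr (Or.inl ⟨rfl, h⟩)⟩

open scoped Classical in
/-- The maximal representative of `x` in `Carrier α`. -/
noncomputable def MQ (x : α) : Carrier α :=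
  if h : IsMax x then fQ x else show Carrier α from ⟨(x, 2), Or.inr (Or.inr ⟨rfl, h⟩)⟩

lemma mQ_val (x : α) : (mQ x).1.1 = x := by
  unfold mQ; split_ifs <;> rfl

lemma MQ_val (x : α) : (MQ x).1.1 = x := by
  unfold MQ; split_ifs <;> rfl

lemma mQ_tag (x : α) : (mQ x).1.2 ≠ 2 := by
  unfold mQ; split_ifs <;> simp [fQ_val]

lemma MQ_tag (x : α) : (MQ x).1.2 ≠ 1 := by
  unfold MQ; split_ifs <;> simp [fQ_val]

lemma mQ_le_fQ (x : α) : mQ x ≤ fQ x := by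
  unfold mQ; split_ifs with h
  · exact le_rfl
  · exact Or.inr ⟨by simp, by simp [fQ_val], le_rfl⟩

lemma fQ_le_MQ (x : α) : fQ x ≤ MQ x := by
  unfold MQ; split_ifs with h
  · exact le_rfl
  · exact Or.inr ⟨by simp [fQ_val], by simp, le_rfl⟩

lemma isMin_mQ (x : α) : IsMin (mQ x) := by
  intro z hz
  unfold mQ at *
  split_ifs at * with h
  · rcases hz with rfl | ⟨h2, h1, hle⟩
    · exact le_rfl
    · -- z ≤ fQ x with x minimal
      have hzx : z.1.1 = x := le_antisymm hle (h hle)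
      have hz0 : z.1.2 = 0 := by
        rcases z.2 with h0 | ⟨ht, hmin⟩ | ⟨ht, hmax⟩
        · exact h0
        · exact absurd (hzx ▸ h) hmin
        · omega
      have : z = fQ x := Subtype.ext (Prod.ext hzx hz0)
      exact this ▸ le_rfl
  · rcases hz with rfl | ⟨h2, h1, hle⟩
    · exact le_rfl
    · simp at h1
lemma isMax_MQ (x : α) : IsMax (MQ x) := by
  intro z hz
  unfold MQ at *
  split_ifs at * with h
  · rcases hz with rfl | ⟨h2, h1, hle⟩
    · exact le_rfl
    · have hzx : z.1.1 = x := le_antisymm (h hle) hle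
      have hz0 : z.1.2 = 0 := by
        rcases z.2 with h0 | ⟨ht, hmin⟩ | ⟨ht, hmax⟩
        · exact h0
        · omega
        · exact absurd (hzx ▸ h) hmax
      have : z = fQ x := Subtype.ext (Prod.ext hzx hz0)
      exact this ▸ le_rfl
  · rcases hz with rfl | ⟨h2, h1, hle⟩
    · exact le_rfl
    · simp at h2

lemma incomp_mQ_MQ {x y : α} (h : Incomp x y) : Incomp (mQ x) (MQ y) := by
  constructor
  · rintro (heq | ⟨-, -, hle⟩)
    · have : x = y := by
        have := congrArg (fun p : Carrier α => p.1.1) heq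
        simpa [mQ_val, MQ_val] using this
      exact h.1 (this ▸ le_rfl)
    · rw [mQ_val, MQ_val] at hle
      exact h.1 hle
  · rintro (heq | ⟨h2, h1, hle⟩)
    · have : y = x := by
        have := congrArg (fun p : Carrier α => p.1.1) heq
        simpa [mQ_val, MQ_val] using this
      exact h.2 (this ▸ le_rfl)
    · rw [mQ_val, MQ_val] at hle
      exact h.2 hle

lemma carrier_lt {p q : Carrier α} (h : p < q) :
    p.1.2 ≠ 2 ∧ q.1.2 ≠ 1 ∧ p.1.1 ≤ q.1.1 ∧ p ≠ q := by
  obtain ⟨hle, hne⟩ := lt_iff_le_and_ne.mp h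
  rcases hle with rfl | ⟨h2, h1, hle⟩
  · exact absurd rfl hne
  · exact ⟨h2, h1, hle, hne⟩

lemma fQ_covby_iff {x y : α} : fQ x ⋖ fQ y ↔ x ⋖ y := by
  constructor
  · intro h
    have hxy : x < y := by
      obtain ⟨-, -, hle, hne⟩ := carrier_lt h.lt
      exact lt_of_le_of_ne hle (fun he => hne (Subtype.ext (Prod.ext he rfl)))
    refine ⟨hxy, fun c hc1 hc2 => ?_⟩
    exact h.2 (fQ.lt_iff_lt.mpr hc1 : fQ x < fQ c) (fQ.lt_iff_lt.mpr hc2)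
  · intro h
    refine ⟨fQ.lt_iff_lt.mpr h.lt, fun c hc1 hc2 => ?_⟩
    obtain ⟨c2, c1, hle1, hne1⟩ := carrier_lt hc1
    obtain ⟨d2, d1, hle2, hne2⟩ := carrier_lt hc2
    have hc0 : c.1.2 = 0 := by omega
    have hcx : c.1.1 ≠ x := fun he => hne1 (Subtype.ext (Prod.ext he hc0)).symm
    have hcy : c.1.1 ≠ y := fun he => hne2 (Subtype.ext (Prod.ext he hc0))
    exact h.2 (lt_of_le_of_ne hle1 (Ne.symm hcx)) (lt_of_le_of_ne hle2 hcy)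

lemma coverGraph_adj_fQ (x y : α) :
    (coverGraph (Carrier α)).Adj (fQ x) (fQ y) ↔ (coverGraph α).Adj x y := by
  show (fQ x ⋖ fQ y ∨ fQ y ⋖ fQ x) ↔ (x ⋖ y ∨ y ⋖ x)
  rw [fQ_covby_iff, fQ_covby_iff]

lemma neighbor_tag1 {x : α} (hx : ¬ IsMin x) :
    (coverGraph (Carrier α)).neighborSet ⟨(x, 1), Or.inr (Or.inl ⟨rfl, hx⟩)⟩ = {fQ x} := by
  set m : Carrier α := ⟨(x, 1), Or.inr (Or.inl ⟨rfl, hx⟩)⟩ with hm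
  have hmlt : m < fQ x := by
    rw [lt_iff_le_and_ne]
    refine ⟨Or.inr ⟨by simp [hm], by simp [fQ_val], le_rfl⟩, ?_⟩
    intro he
    have := congrArg (fun p : Carrier α => p.1.2) he
    simp [hm, fQ_val] at this
  have hbelow : ∀ z : Carrier α, ¬ z < m := by
    intro z hz
    obtain ⟨-, h1, -, -⟩ := carrier_lt hz
    simp [hm] at h1
  have habove : ∀ z : Carrier α, m < z → z ≠ fQ x → fQ x < z := by
    intro z hz hne
    obtain ⟨-, h1, hle, -⟩ := carrier_lt hz
    rw [lt_iff_le_and_ne]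
    exact ⟨Or.inr ⟨by simp [fQ_val], h1, by simpa [hm, fQ_val] using hle⟩, Ne.symm hne⟩
  ext z
  simp only [SimpleGraph.mem_neighborSet, Set.mem_singleton_iff]
  constructor
  · rintro (h | h)
    · by_contra hne
      exact h.2 hmlt (habove z h.lt hne)
    · exact absurd h.lt (hbelow z)
  · rintro rfl
    left
    refine ⟨hmlt, fun c hc1 hc2 => ?_⟩
    obtain ⟨-, c1, hle1, -⟩ := carrier_lt hc1
    obtain ⟨c2, -, hle2, hne2⟩ := carrier_lt hc2
    have hc0 : c.1.2 = 0 := by omega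
    have : c.1.1 = x := le_antisymm (by simpa [fQ_val] using hle2) (by simpa [hm] using hle1)
    exact hne2 (Subtype.ext (Prod.ext this hc0))

lemma neighbor_tag2 {x : α} (hx : ¬ IsMax x) :
    (coverGraph (Carrier α)).neighborSet ⟨(x, 2), Or.inr (Or.inr ⟨rfl, hx⟩)⟩ = {fQ x} := by
  set m : Carrier α := ⟨(x, 2), Or.inr (Or.inr ⟨rfl, hx⟩)⟩ with hm
  have hmlt : fQ x < m := by
    rw [lt_iff_le_and_ne]
    refine ⟨Or.inr ⟨by simp [fQ_val], by simp [hm], le_rfl⟩, ?_⟩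
    intro he
    have := congrArg (fun p : Carrier α => p.1.2) he
    simp [hm, fQ_val] at this
  have habove : ∀ z : Carrier α, ¬ m < z := by
    intro z hz
    obtain ⟨h2, -, -, -⟩ := carrier_lt hz
    simp [hm] at h2
  have hbelow : ∀ z : Carrier α, z < m → z ≠ fQ x → z < fQ x := by
    intro z hz hne
    obtain ⟨h2, -, hle, -⟩ := carrier_lt hz
    rw [lt_iff_le_and_ne]
    exact ⟨Or.inr ⟨h2, by simp [fQ_val], by simpa [hm, fQ_val] using hle⟩, hne⟩
  ext z
  simp only [SimpleGraph.mem_neighborSet, Set.mem_singleton_iff]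
  constructor
  · rintro (h | h)
    · exact absurd h.lt (habove z)
    · by_contra hne
      exact h.2 (hbelow z h.lt hne) hmlt
  · rintro rfl
    right
    refine ⟨hmlt, fun c hc1 hc2 => ?_⟩
    obtain ⟨-, c1, hle1, hne1⟩ := carrier_lt hc1
    obtain ⟨c2, -, hle2, -⟩ := carrier_lt hc2
    have hc0 : c.1.2 = 0 := by omega
    have : c.1.1 = x := le_antisymm (by simpa [hm] using hle2) (by simpa [fQ_val] using hle1)
    exact hne1 (Subtype.ext (Prod.ext this hc0)).symm

lemma notMin_of_tag1 (p : Carrier α) (h : p.1.2 = 1) : ¬ IsMin p.1.1 := by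
  rcases p.2 with h0 | ⟨-, hmin⟩ | ⟨h2, -⟩
  · omega
  · exact hmin
  · omega

lemma notMax_of_tag2 (p : Carrier α) (h : p.1.2 = 2) : ¬ IsMax p.1.1 := by
  rcases p.2 with h0 | ⟨h1, -⟩ | ⟨-, hmax⟩
  · omega
  · omega
  · exact hmax

open scoped Classical in
/-- Project a carrier element back to `α`, pushing pendants strictly past
their anchors. -/
noncomputable def gQ : Carrier α → α := fun p =>
  if h : p.1.2 = 1 then Classical.choose (not_isMin_iff.mp (notMin_of_tag1 p h))
  else if h2 : p.1.2 = 2 then Classical.choose (not_isMax_iff.mp (notMax_of_tag2 p h2))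
  else p.1.1

lemma gQ_lt_of_tag1 (p : Carrier α) (h : p.1.2 = 1) : gQ p < p.1.1 := by
  unfold gQ
  rw [dif_pos h]
  exact Classical.choose_spec (not_isMin_iff.mp (notMin_of_tag1 p h))

lemma gQ_gt_of_tag2 (p : Carrier α) (h : p.1.2 = 2) : p.1.1 < gQ p := by
  unfold gQ
  rw [dif_neg (by omega), dif_pos h]
  exact Classical.choose_spec (not_isMax_iff.mp (notMax_of_tag2 p h))

lemma gQ_of_tag0 (p : Carrier α) (h : p.1.2 = 0) : gQ p = p.1.1 := by
  unfold gQ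
  rw [dif_neg (by omega), dif_neg (by omega)]

lemma gQ_strictMono {p q : Carrier α} (h : p < q) : gQ p < gQ q := by
  obtain ⟨h2, h1, hle, hne⟩ := carrier_lt h
  have hp : gQ p < p.1.1 ∨ (gQ p = p.1.1 ∧ p.1.2 = 0) := by
    by_cases ht : p.1.2 = 1
    · exact Or.inl (gQ_lt_of_tag1 p ht)
    · have h0 : p.1.2 = 0 := by omega
      exact Or.inr ⟨gQ_of_tag0 p h0, h0⟩
  have hq : q.1.1 < gQ q ∨ (gQ q = q.1.1 ∧ q.1.2 = 0) := by
    by_cases ht : q.1.2 = 2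
    · exact Or.inl (gQ_gt_of_tag2 q ht)
    · have h0 : q.1.2 = 0 := by omega
      exact Or.inr ⟨gQ_of_tag0 q h0, h0⟩
  rcases hp with hp | ⟨hp, hp0⟩ <;> rcases hq with hq | ⟨hq, hq0⟩
  · exact hp.trans_le (hle.trans hq.le)
  · rw [hq]; exact hp.trans_le hle
  · rw [hp]; exact hle.trans_lt hq
  · rw [hp, hq]
    refine lt_of_le_of_ne hle fun he => hne ?_
    exact Subtype.ext (Prod.ext he (hp0.trans hq0.symm))

lemma height_eq : posetHeight (Carrier α) = posetHeight α := by
  classical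
  unfold posetHeight
  congr 1
  ext n
  constructor
  · rintro ⟨s, hcard, hchain⟩
    refine ⟨s.image gQ, ?_, ?_⟩
    · rw [Finset.card_image_of_injOn, hcard]
      intro p hp q hq hne
      by_contra hpq
      rcases hchain (by simpa using hp) (by simpa using hq) hpq with h | h
      · exact absurd hne (gQ_strictMono (lt_of_le_of_ne h hpq)).ne
      · exact absurd hne.symm (gQ_strictMono (lt_of_le_of_ne h (Ne.symm hpq))).ne
    · intro u hu v hv huv
      simp only [Finset.coe_image, Set.mem_image, Finset.mem_coe] at hu hv
      obtain ⟨p, hp, rfl⟩ := hu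
      obtain ⟨q, hq, rfl⟩ := hv
      have hpq : p ≠ q := fun he => huv (congrArg gQ he)
      rcases hchain hp hq hpq with h | h
      · exact Or.inl (gQ_strictMono (lt_of_le_of_ne h hpq)).le
      · exact Or.inr (gQ_strictMono (lt_of_le_of_ne h (Ne.symm hpq))).le
  · rintro ⟨s, hcard, hchain⟩
    refine ⟨s.map fQ.toEmbedding, by simp [hcard], ?_⟩
    intro u hu v hv huv
    simp only [Finset.coe_map, Set.mem_image, Finset.mem_coe] at hu hv
    obtain ⟨x, hx, rfl⟩ := hu
    obtain ⟨y, hy, rfl⟩ := hv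
    have hxy : x ≠ y := fun he => huv (congrArg _ he)
    rcases hchain hx hy hxy with h | h
    · exact Or.inl (fQ.le_iff_le.mpr h)
    · exact Or.inr (fQ.le_iff_le.mpr h)

lemma pullLin_le {β : Type*} (L : LinearOrder β) (f : α → β) (hf : Function.Injective f)
    (x y : α) : (pullLin L f hf).le x y ↔ L.le (f x) (f y) := Iff.rfl

theorem dim_le (α : Type*) [Fintype α] [PartialOrder α] :
    posetDim α ≤ dimI (incMinMax (Carrier α)) := by
  classical
  have hne : {d | 1 ≤ d ∧ ∃ J : Fin d → Set (Carrier α × Carrier α),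
      (∀ i, J i ⊆ incPairs (Carrier α) ∧ Reversible (J i)) ∧
      incMinMax (Carrier α) ⊆ ⋃ i, J i}.Nonempty := by
    set n := Fintype.card (Carrier α × Carrier α) with hn
    set e := Fintype.equivFin (Carrier α × Carrier α) with he
    refine ⟨n + 1, Nat.le_add_left 1 n,
      fun i => {p | p ∈ incMinMax (Carrier α) ∧ ((e p : Fin n) : ℕ) = i.1}, fun i => ?_, ?_⟩
    · constructor
      · intro p hp
        exact hp.1.1
      · refine reversible_of_subsingleton (fun p hp => hp.1.1) ?_
        intro p hp q hq
        apply e.injective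
        exact Fin.ext (hp.2.trans hq.2.symm)
    · intro p hp
      refine Set.mem_iUnion.mpr ⟨⟨(e p : Fin n), by omega⟩, hp, rfl⟩
  have hd := Nat.sInf_mem hne
  obtain ⟨hd1, J, hJ, hcov⟩ := hd
  choose L hLext hLrev using fun i => (hJ i).2
  refine Nat.sInf_le ⟨hd1, fun i => pullLin (L i) fQ fQ.injective, fun x y => ?_⟩
  constructor
  · intro hxy i
    exact hLext i (fQ x) (fQ y) (fQ.le_iff_le.mpr hxy)
  · intro h
    by_contra hxy
    by_cases hyx : y ≤ x
    · have hi := h ⟨0, hd1⟩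
      rw [pullLin_le] at hi
      have hi2 := hLext ⟨0, hd1⟩ (fQ y) (fQ x) (fQ.le_iff_le.mpr hyx)
      have : fQ x = fQ y := (L ⟨0, hd1⟩).le_antisymm _ _ hi hi2
      exact hxy (le_of_eq (fQ.injective this))
    · have hp : (mQ x, MQ y) ∈ incMinMax (Carrier α) :=
        ⟨incomp_mQ_MQ ⟨hxy, hyx⟩, isMin_mQ x, isMax_MQ y⟩
      obtain ⟨i, hpi⟩ := Set.mem_iUnion.mp (hcov hp)
      have hrev := hLrev i (mQ x, MQ y) hpi
      have hi := h i
      rw [pullLin_le] at hi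
      have h1 := hLext i (mQ x) (fQ x) (mQ_le_fQ x)
      have h2 := hLext i (fQ y) (MQ y) (fQ_le_MQ y)
      have hle : (L i).le (mQ x) (MQ y) :=
        (L i).le_trans _ _ _ ((L i).le_trans _ _ _ h1 hi) h2
      exact (((L i).lt_iff_le_not_ge _ _).mp hrev).2 hle

end MinMaxRed

open PlanarDim in
/-- **Reduction to min-max pairs.** For every finite poset `P`
there is a finite poset `Q` containing `P` as an induced subposet (via an
order embedding `f`) such that (1) `Q` and `P` have the same height; (2) every
element of `Q` outside (the image of) `P` has degree 1 in the cover graph of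
`Q`, and the cover graph of `Q` restricted to the elements of `P` coincides
with the cover graph of `P`; and (3) `dim(P) ≤ dim(Min(Q), Max(Q))`. -/
theorem reduction_to_min_max
    (α : Type) [Fintype α] [PartialOrder α] :
    ∃ (β : Type) (_ : Fintype β) (_ : PartialOrder β) (f : α ↪o β),
      posetHeight β = posetHeight α ∧
      (∀ b : β, b ∉ Set.range f →
        ((coverGraph β).neighborSet b).ncard = 1) ∧
      (∀ x y : α,
        (coverGraph β).Adj (f x) (f y) ↔ (coverGraph α).Adj x y) ∧
      posetDim α ≤ dimI (incMinMax β) := by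
  classical
  refine ⟨MinMaxRed.Carrier α, inferInstance, inferInstance, MinMaxRed.fQ,
    MinMaxRed.height_eq, ?_, MinMaxRed.coverGraph_adj_fQ, MinMaxRed.dim_le α⟩
  intro b hb
  rcases b.2 with h0 | ⟨h1, hmin⟩ | ⟨h2, hmax⟩
  · exact absurd (MinMaxRed.mem_range_fQ h0) hb
  · have hbe : b = ⟨(b.1.1, 1), Or.inr (Or.inl ⟨rfl, hmin⟩)⟩ := Subtype.ext (Prod.ext rfl h1)
    rw [hbe, MinMaxRed.neighbor_tag1 hmin, Set.ncard_singleton]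
  · have hbe : b = ⟨(b.1.1, 2), Or.inr (Or.inr ⟨rfl, hmax⟩)⟩ := Subtype.ext (Prod.ext rfl h2)
    rw [hbe, MinMaxRed.neighbor_tag2 hmax, Set.ncard_singleton]
end
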